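/- Let H→ be an acyclic orientation of a simple graph H with source set S, and let S_p ⊆ S. If the unique reachability graph UR_{S_p} contains a cycle of length ℓ (where ℓ ≥ 3), then H contains an induced cycle of length at least 2ℓ. -/

import Mathlib

/-- An acyclic orientation of a simple graph `H`: a relation `D` directing every
edge of `H` (and nothing else) with no directed cycle. -/
structure GraphOrientation {V : Type} (H : SimpleGraph V) : Type where
  D : V → V → Prop
  adj_of_rel : ∀ u v, D u v → H.Adj u v
  rel_of_adj : ∀ u v, H.Adj u v → D u v ∨ D v u
  acyclic : ∀ v, ¬ Relation.TransGen D v v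

namespace GraphOrientation

variable {V : Type} {H : SimpleGraph V}

/-- The set of sources of an acyclic orientation: vertices with no incoming edge. -/
def sources (O : GraphOrientation H) : Set V := {s | ∀ u, ¬ O.D u s}

/-- The set of vertices reachable from `s` by a directed path (including `s`). -/
def reach (O : GraphOrientation H) (s : V) : Set V := {v | Relation.ReflTransGen O.D s v}

/-- The set of vertices reachable from some vertex of `B`. -/
def reachSet (O : GraphOrientation H) (B : Set V) : Set V := ⋃ s ∈ B, O.reach s

end GraphOrientation

/-- `tree` together with the bag assignment `bag` is a (partial) DAG tree
decomposition of the orientation `O` with respect to the vertex set `Sp`: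
a finite tree whose bags are subsets of `Sp` whose union is `Sp`, such that
whenever a node `j` lies on the (unique) path between nodes `i` and `k`,
`reach(bag i) ∩ reach(bag k) ⊆ reach(bag j)`.
Taking `Sp = O.sources` gives the notion of a DAG tree decomposition of `O`. -/
def IsPDTD {V : Type} {H : SimpleGraph V} (O : GraphOrientation H) (Sp : Set V)
    {ι : Type} (tree : SimpleGraph ι) (bag : ι → Set V) : Prop :=
  Finite ι ∧ tree.IsTree ∧ (∀ i, bag i ⊆ Sp) ∧ (⋃ i, bag i) = Sp ∧
    ∀ (i j k : ι) (p : tree.Walk i k), p.IsPath → j ∈ p.support →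
      O.reachSet (bag i) ∩ O.reachSet (bag k) ⊆ O.reachSet (bag j)

/-- The width of a bag assignment: the maximum bag size. -/
noncomputable def bagWidth {V ι : Type} (bag : ι → Set V) : ℕ := ⨆ i, (bag i).ncard

/-- A width-one (partial) DAG tree decomposition: every bag is a singleton, and
distinct nodes carry distinct bags (so nodes may be identified with sources). -/
def IsWidthOnePDTD {V : Type} {H : SimpleGraph V} (O : GraphOrientation H) (Sp : Set V)
    {ι : Type} (tree : SimpleGraph ι) (bag : ι → Set V) : Prop :=
  IsPDTD O Sp tree bag ∧ Function.Injective bag ∧ ∀ i, ∃ s : V, bag i = {s}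

/-- `H` contains an induced cycle of length `n`. -/
def HasInducedCycleOfLength {V : Type} (H : SimpleGraph V) (n : ℕ) : Prop :=
  Nonempty (SimpleGraph.cycleGraph n ↪g H)

/-- The unique reachability graph of an orientation `O` over a set `Sp` of sources:
`s₁` and `s₂` are adjacent iff some vertex is reachable from both `s₁` and `s₂`
but from no other member of `Sp`. -/
def URGraph {V : Type} {H : SimpleGraph V} (O : GraphOrientation H) (Sp : Set V) :
    SimpleGraph V where
  Adj s₁ s₂ := s₁ ∈ Sp ∧ s₂ ∈ Sp ∧ s₁ ≠ s₂ ∧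
    ((O.reach s₁ ∩ O.reach s₂) \ O.reachSet (Sp \ {s₁, s₂})).Nonempty
  symm := ⟨by
    rintro a b ⟨ha, hb, hab, hx⟩
    refine ⟨hb, ha, hab.symm, ?_⟩
    rwa [Set.inter_comm (O.reach b) (O.reach a), Set.pair_comm b a]⟩
  loopless := ⟨by
    rintro a ⟨-, -, h, -⟩
    exact h rfl⟩

/-- `(x, (tree, bag))` is a good pair: some leaf `ℓ` of the width-one decomposition,
with unique neighbour `d`, satisfies `reach x ∩ reach ℓ ⊆ reach d`. -/
def GoodPair {V : Type} {H : SimpleGraph V} (O : GraphOrientation H)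
    {ι : Type} (tree : SimpleGraph ι) (bag : ι → Set V) (x : V) : Prop :=
  ∃ (i j : ι) (l d : V), tree.neighborSet i = {j} ∧ bag i = {l} ∧ bag j = {d} ∧
    O.reach x ∩ O.reach l ⊆ O.reach d

/-!
Let `S₀, …, S_{ℓ-1}` be the sources around the cycle of `UR_{S_p}` and let `xᵢ` be a vertex
reached from `Sᵢ` and `S_{i+1}` but from no other source. A vertex `v` below `xᵢ` that is reached
from some source is reached from `Sᵢ`, from `S_{i+1}`, or from both; place it at `2i`, `2i + 2`
or `2i + 1` on a cycle of length `2ℓ`. Consistency of the positions needs `ℓ ≥ 3`, and along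
every edge the position moves by at most one step. The closed walk
`S₀ ⇝ x₀ ⇝ S₁ ⇝ x₁ ⇝ ⋯ ⇝ S₀` then winds once around the `2ℓ`-cycle.

Among closed walks with nonzero winding number a shortest one is a chordless cycle: a repeated
vertex or a chord cuts a closed walk into two shorter closed walks whose winding numbers add up.
Its length is at least `2ℓ`, since the winding number of a closed walk is a multiple of `2ℓ`
bounded in absolute value by the length.
-/

namespace SimpleGraph

variable {W : Type*} {G : SimpleGraph W} {m : ℕ}

theorem cycleGraph_adj_iff_eq_add_one {n : ℕ} [NeZero n] (hn : 2 ≤ n) {i j : Fin n} :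
    (cycleGraph n).Adj i j ↔ j = i + 1 ∨ i = j + 1 := by
  obtain ⟨k, rfl⟩ : ∃ k, n = k + 2 := ⟨n - 2, by omega⟩
  rw [cycleGraph_adj, sub_eq_iff_eq_add, sub_eq_iff_eq_add, add_comm 1 j, add_comm 1 i, or_comm]

theorem cycleGraph_adj_add_one {n : ℕ} [NeZero n] (hn : 2 ≤ n) (i : Fin n) :
    (cycleGraph n).Adj i (i + 1) :=
  (cycleGraph_adj_iff_eq_add_one hn).2 (.inl rfl)

/-- A homomorphism from `G` to the `m`-cycle with a loop at every vertex. -/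
def IsCyclePotential (G : SimpleGraph W) (p : W → ZMod m) : Prop :=
  ∀ ⦃u v : W⦄, G.Adj u v → ∃ d : ℤ, |d| ≤ 1 ∧ p v - p u = d

namespace Walk

section Winding

-- A difference of two indicators, so that it is antisymmetric even when `1 = -1` in `ZMod m`.
def windingStep (p : W → ZMod m) (u v : W) : ℤ :=
  (if p v - p u = 1 then 1 else 0) - (if p u - p v = 1 then 1 else 0)

def winding (p : W → ZMod m) {a b : W} (w : G.Walk a b) : ℤ :=
  (w.darts.map fun d => windingStep p d.fst d.snd).sum

variable (p : W → ZMod m)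

theorem windingStep_swap (u v : W) : windingStep p v u = -windingStep p u v := by
  unfold windingStep; ring

theorem abs_windingStep_le_one (u v : W) : |windingStep p u v| ≤ 1 := by
  unfold windingStep; split_ifs <;> simp

theorem windingStep_eq (hm : 3 ≤ m) {u v : W} {d : ℤ} (hd : |d| ≤ 1)
    (h : p v - p u = d) : windingStep p u v = d := by
  have : Fact (1 < m) := ⟨by omega⟩
  have : Fact (2 < m) := ⟨by omega⟩
  have h' : p u - p v = -d := by rw [← h]; ring
  unfold windingStep
  obtain rfl | rfl | rfl : d = -1 ∨ d = 0 ∨ d = 1 := by rw [abs_le] at hd; omega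
  all_goals simp [h, h', ZMod.neg_one_ne_one]

@[simp] theorem winding_nil {a : W} : winding p (nil : G.Walk a a) = 0 := rfl

@[simp] theorem winding_cons {a b c : W} (h : G.Adj a b) (w : G.Walk b c) :
    winding p (cons h w) = windingStep p a b + winding p w := by
  simp [winding]

@[simp] theorem winding_copy {a b a' b' : W} (w : G.Walk a b) (ha : a = a') (hb : b = b') :
    winding p (w.copy ha hb) = winding p w := by
  simp [winding]

@[simp] theorem winding_append {a b c : W} (w₁ : G.Walk a b) (w₂ : G.Walk b c) :
    winding p (w₁.append w₂) = winding p w₁ + winding p w₂ := by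
  simp [winding]

@[simp] theorem winding_reverse {a b : W} (w : G.Walk a b) :
    winding p w.reverse = -winding p w := by
  induction w with
  | nil => rfl
  | cons h w ih => rw [reverse_cons, winding_append, ih, winding_cons, winding_cons, winding_nil,
      windingStep_swap]; ring

theorem winding_induce (s : Set W) {a b : W} (w : G.Walk a b) (hw : ∀ z ∈ w.support, z ∈ s) :
    winding (fun z : s => p z) (w.induce s hw) = winding p w := by
  induction w with
  | nil => rfl
  | cons h w ih => simp [ih]; rfl

theorem abs_winding_le_length {a b : W} (w : G.Walk a b) : |winding p w| ≤ w.length := by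
  induction w with
  | nil => simp
  | @cons a b c h w ih =>
    rw [winding_cons, length_cons]
    have := abs_windingStep_le_one p a b
    push_cast
    linarith [abs_add_le (windingStep p a b) (winding p w)]

theorem winding_eq_sub_of_lift (hm : 3 ≤ m) (c : ZMod m) (q : W → ℤ) {a b : W} (w : G.Walk a b)
    (hpq : ∀ z ∈ w.support, p z = c + q z) (hq : ∀ d ∈ w.darts, |q d.snd - q d.fst| ≤ 1) :
    winding p w = q b - q a := by
  induction w with
  | nil => simp
  | @cons a b c' h w ih =>
    have hstep : windingStep p a b = q b - q a :=
      windingStep_eq p hm (hq ⟨(a, b), h⟩ (by simp))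
        (by rw [hpq a (by simp), hpq b (by simp)]; push_cast; ring)
    rw [winding_cons, hstep, ih (fun z hz => hpq z (by simp [hz]))
      (fun d hd => hq d (by simp [hd]))]
    ring

theorem exists_walk_winding_eq_mul (f : ℕ → W) {c : ℤ}
    (h : ∀ k, ∃ w : G.Walk (f k) (f (k + 1)), winding p w = c) (n : ℕ) :
    ∃ w : G.Walk (f 0) (f n), winding p w = n * c := by
  induction n with
  | zero => exact ⟨nil, by simp⟩
  | succ n ih =>
    obtain ⟨w, hw⟩ := ih
    obtain ⟨w', hw'⟩ := h n
    exact ⟨w.append w', by rw [winding_append, hw, hw']; push_cast; ring⟩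

end Winding

variable {p : W → ZMod m}

theorem intCast_winding (hm : 3 ≤ m) (hp : G.IsCyclePotential p) {a b : W} (w : G.Walk a b) :
    (winding p w : ZMod m) = p b - p a := by
  induction w with
  | nil => simp
  | cons h w ih =>
    obtain ⟨d, hd, hpd⟩ := hp h
    rw [winding_cons, windingStep_eq p hm hd hpd]
    push_cast
    rw [ih, ← hpd]
    ring

theorem le_length_of_winding_ne_zero (hm : 3 ≤ m) (hp : G.IsCyclePotential p) {a : W}
    (w : G.Walk a a) (hw : winding p w ≠ 0) : m ≤ w.length := by
  have hdvd : (m : ℤ) ∣ winding p w :=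
    (ZMod.intCast_zmod_eq_zero_iff_dvd _ _).1 (by rw [intCast_winding hm hp, sub_self])
  have hle := Int.le_of_dvd (abs_pos.2 hw) ((dvd_abs _ _).2 hdvd)
  exact_mod_cast hle.trans (abs_winding_le_length p w)

section Shortcut

-- Then `w₂ ++ s` and `w₃ ++ w₁ ++ s.reverse` are closed walks shorter than `w` whose winding
-- numbers add up to that of `w`.
def HasShortcut {a : W} (w : G.Walk a a) : Prop :=
  ∃ (u v : W) (w₁ : G.Walk a u) (w₂ : G.Walk u v) (w₃ : G.Walk v a) (s : G.Walk v u),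
    (w₁.append w₂).append w₃ = w ∧ s.length < w₂.length ∧ s.length < w₁.length + w₃.length

theorem HasShortcut.exists_shorter_winding_ne_zero {a : W} {w : G.Walk a a} (hw : w.HasShortcut)
    (hwind : winding p w ≠ 0) : ∃ (b : W) (w' : G.Walk b b), w'.length < w.length ∧
      winding p w' ≠ 0 := by
  obtain ⟨u, v, w₁, w₂, w₃, s, rfl, h₂, h₁₃⟩ := hw
  have hsum : winding p (w₂.append s) + winding p ((w₃.append w₁).append s.reverse) =
      winding p ((w₁.append w₂).append w₃) := by
    simp only [winding_append, winding_reverse]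
    ring
  by_cases h : winding p (w₂.append s) = 0
  · exact ⟨v, (w₃.append w₁).append s.reverse, by simp; omega, by omega⟩
  · exact ⟨u, w₂.append s, by simp; omega, h⟩

theorem exists_append_append_eq {a b : W} (w : G.Walk a b) {i j : ℕ} (hij : i ≤ j)
    (hj : j ≤ w.length) :
    ∃ (w₁ : G.Walk a (w.getVert i)) (w₂ : G.Walk (w.getVert i) (w.getVert j))
      (w₃ : G.Walk (w.getVert j) b),
      (w₁.append w₂).append w₃ = w ∧ w₁.length = i ∧ w₂.length = j - i := by
  have hv : (w.drop i).getVert (j - i) = w.getVert j := by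
    rw [drop_getVert, Nat.add_sub_cancel' hij]
  refine ⟨w.take i, ((w.drop i).take (j - i)).copy rfl hv, ((w.drop i).drop (j - i)).copy hv rfl,
    ?_, ?_, ?_⟩
  · rw [← append_assoc, append_copy_copy, append_take_drop_eq, copy_rfl_rfl, append_take_drop_eq]
  · rw [take_length]; omega
  · rw [length_copy, take_length, drop_length]; omega

theorem hasShortcut_of_getVert_eq {a : W} (w : G.Walk a a) {i j : ℕ} (hi : 0 < i) (hij : i < j)
    (hj : j ≤ w.length) (h : w.getVert j = w.getVert i) : w.HasShortcut := by
  obtain ⟨w₁, w₂, w₃, hw, h₁, h₂⟩ := exists_append_append_eq w hij.le hj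
  exact ⟨_, _, w₁, w₂, w₃, nil.copy rfl h, hw, by simp; omega, by simp; omega⟩

theorem hasShortcut_of_chord {a : W} (w : G.Walk a a) {i j : ℕ} (hij : i < j) (hj : j < w.length)
    (hadj : G.Adj (w.getVert i) (w.getVert j)) (hnot : s(w.getVert i, w.getVert j) ∉ w.edges) :
    w.HasShortcut := by
  have hij2 : i + 2 ≤ j := by
    by_contra
    obtain rfl : j = i + 1 := by omega
    exact hnot ((mk_mem_edges_iff_exists w).2 ⟨i, by omega, rfl⟩)
  have hji : j + 2 ≤ w.length + i := by
    by_contra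
    obtain ⟨rfl, hjn⟩ : i = 0 ∧ j + 1 = w.length := by omega
    refine hnot ((mk_mem_edges_iff_exists w).2 ⟨j, hj, ?_⟩)
    rw [hjn, getVert_length, getVert_zero, Sym2.eq_swap]
  obtain ⟨w₁, w₂, w₃, hw, h₁, h₂⟩ := exists_append_append_eq w hij.le hj.le
  have h₃ : w₃.length = w.length - j := by
    have := congrArg length hw
    simp only [length_append] at this
    omega
  exact ⟨_, _, w₁, w₂, w₃, hadj.symm.toWalk, hw, by simp; omega, by simp; omega⟩

theorem hasShortcut_of_not_isCycle {a : W} (w : G.Walk a a) (h3 : 3 ≤ w.length)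
    (h : ¬ w.IsCycle) : w.HasShortcut := by
  rw [isCycle_iff_isPath_tail_and_le_length, ← IsPath.getVert_injOn_iff] at h
  simp only [h3, and_true, Set.InjOn, Set.mem_ofPred_eq, length_tail, getVert_tail] at h
  push Not at h
  obtain ⟨x, hx, y, hy, hxy, hne⟩ := h
  rcases Nat.lt_or_gt_of_ne hne with hlt | hlt
  · exact hasShortcut_of_getVert_eq w (by omega) (by omega : x + 1 < y + 1) (by omega) hxy.symm
  · exact hasShortcut_of_getVert_eq w (by omega) (by omega : y + 1 < x + 1) (by omega) hxy

theorem exists_lt_length_getVert_eq {a z : W} {w : G.Walk a a} (hw : 0 < w.length)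
    (hz : z ∈ w.support) : ∃ k < w.length, w.getVert k = z := by
  obtain ⟨k, rfl, hk⟩ := mem_support_iff_exists_getVert.1 hz
  rcases hk.lt_or_eq with hk | rfl
  · exact ⟨k, hk, rfl⟩
  · exact ⟨0, hw, by simp⟩

theorem hasShortcut_of_not_isChordless {a : W} (w : G.Walk a a) (h : ¬ w.IsChordless) :
    w.HasShortcut := by
  rw [isChordless_iff_forall_mem_edges] at h
  push Not at h
  obtain ⟨u, v, hu, hv, hadj, hnot⟩ := h
  have hpos : 0 < w.length := by
    by_contra! h0
    obtain ⟨k, rfl, -⟩ := mem_support_iff_exists_getVert.1 hu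
    obtain ⟨l, rfl, -⟩ := mem_support_iff_exists_getVert.1 hv
    rw [getVert_of_length_le _ (by omega), getVert_of_length_le _ (by omega)] at hadj
    exact hadj.ne rfl
  obtain ⟨i, hi, rfl⟩ := exists_lt_length_getVert_eq hpos hu
  obtain ⟨j, hj, rfl⟩ := exists_lt_length_getVert_eq hpos hv
  rcases lt_trichotomy i j with hij | rfl | hij
  · exact hasShortcut_of_chord w hij hj hadj hnot
  · exact absurd rfl hadj.ne
  · exact hasShortcut_of_chord w hij hi hadj.symm (by rwa [Sym2.eq_swap])

end Shortcut

theorem getVert_val_add_one {a : W} (w : G.Walk a a) [NeZero w.length] (i : Fin w.length) :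
    w.getVert ↑(i + 1) = w.getVert (↑i + 1) := by
  rw [Fin.val_add, Fin.val_one', Nat.add_mod_mod]
  rcases (show (i : ℕ) + 1 ≤ w.length from i.2).lt_or_eq with h | h
  · rw [Nat.mod_eq_of_lt h]
  · rw [h, Nat.mod_self, getVert_zero, getVert_length]

theorem IsCycle.nonempty_embedding_cycleGraph {a : W} {w : G.Walk a a} (hc : w.IsCycle)
    (hch : w.IsChordless) : Nonempty (cycleGraph w.length ↪g G) := by
  have h3 := hc.three_le_length
  have : NeZero w.length := ⟨by omega⟩
  have hinj : Function.Injective fun i : Fin w.length => w.getVert i := fun i j h =>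
    Fin.ext (hc.getVert_injOn' (by simp; omega) (by simp; omega) h)
  refine ⟨⟨⟨_, hinj⟩, fun {i j} => ?_⟩⟩
  simp only [Function.Embedding.coeFn_mk]
  rw [cycleGraph_adj_iff_eq_add_one (by omega)]
  constructor
  · intro hadj
    obtain ⟨k, hk, he⟩ := (mk_mem_edges_iff_exists w).1
      (hch.mem_edges (getVert_mem_support _ _) (getVert_mem_support _ _) hadj)
    rw [← getVert_val_add_one w ⟨k, hk⟩] at he
    rcases Sym2.eq_iff.1 he with ⟨h1, h2⟩ | ⟨h1, h2⟩
    · left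
      rw [← hinj (a₁ := ⟨k, hk⟩ + 1) h2, ← hinj (a₁ := ⟨k, hk⟩) h1]
    · right
      rw [← hinj (a₁ := ⟨k, hk⟩ + 1) h2, ← hinj (a₁ := ⟨k, hk⟩) h1]
  · rintro (rfl | rfl)
    · rw [getVert_val_add_one]
      exact w.adj_getVert_succ i.2
    · rw [getVert_val_add_one]
      exact (w.adj_getVert_succ j.2).symm

end Walk

open Walk in
theorem exists_embedding_cycleGraph_of_winding_ne_zero (hm : 3 ≤ m) {p : W → ZMod m}
    (hp : G.IsCyclePotential p) {a : W} (w : G.Walk a a) (hw : winding p w ≠ 0) :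
    ∃ n, m ≤ n ∧ Nonempty (cycleGraph n ↪g G) := by
  induction hn : w.length using Nat.strong_induction_on generalizing a with
  | _ n ih =>
  have hmn := le_length_of_winding_ne_zero hm hp w hw
  by_cases hcyc : w.IsCycle ∧ w.IsChordless
  · exact ⟨w.length, hmn, hcyc.1.nonempty_embedding_cycleGraph hcyc.2⟩
  have hsc : w.HasShortcut := by
    rcases not_and_or.1 hcyc with h | h
    exacts [hasShortcut_of_not_isCycle w (by omega) h, hasShortcut_of_not_isChordless w h]
  obtain ⟨b, w', hlt, hw'⟩ := hsc.exists_shorter_winding_ne_zero hw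
  exact ih _ (hn ▸ hlt) w' hw' rfl

end SimpleGraph

theorem Fin.add_one_ne_self {n : ℕ} [NeZero n] (hn : 2 ≤ n) (a : Fin n) : a + 1 ≠ a := fun h => by
  have := congrArg Fin.val (add_eq_left.1 h)
  rw [Fin.val_one', Nat.mod_eq_of_lt (by omega)] at this
  simp at this

theorem Fin.add_one_add_one_ne_self {n : ℕ} [NeZero n] (hn : 3 ≤ n) (a : Fin n) :
    a + 1 + 1 ≠ a := fun h => by
  have := congrArg Fin.val (add_eq_left.1 ((add_assoc _ _ _).symm.trans h))
  rw [Fin.val_add, Fin.val_one', Nat.mod_eq_of_lt (by omega : 1 < n),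
    Nat.mod_eq_of_lt (by omega : 2 < n)] at this
  simp at this

theorem Fin.natCast_two_mul_val_add_one {ℓ : ℕ} [NeZero ℓ] (i : Fin ℓ) :
    ((2 * (i + 1 : Fin ℓ).val : ℕ) : ZMod (2 * ℓ)) = ((2 * i.val : ℕ) : ZMod (2 * ℓ)) + 2 := by
  rw [show ((2 * i.val : ℕ) : ZMod (2 * ℓ)) + 2 = ((2 * (i.val + 1) : ℕ) : ZMod (2 * ℓ)) by
    push_cast; ring, ZMod.natCast_eq_natCast_iff', Fin.val_add, Fin.val_one', Nat.add_mod_mod,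
    Nat.mul_mod_mul_left, Nat.mul_mod_mul_left, Nat.mod_mod]

namespace GraphOrientation

open SimpleGraph Walk

variable {V : Type} {H : SimpleGraph V} (O : GraphOrientation H)

theorem exists_walk_of_reflTransGen {u z : V} (h : Relation.ReflTransGen O.D u z) :
    ∃ w : H.Walk u z, ∀ y ∈ w.support,
      Relation.ReflTransGen O.D u y ∧ Relation.ReflTransGen O.D y z := by
  induction h with
  | refl =>
    refine ⟨.nil, fun y hy => ?_⟩
    rw [support_nil, List.mem_singleton] at hy
    exact hy ▸ ⟨.refl, .refl⟩
  | @tail b c hub hbc ih =>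
    obtain ⟨w, hw⟩ := ih
    refine ⟨w.concat (O.adj_of_rel b c hbc), fun y hy => ?_⟩
    rw [support_concat, List.mem_append, List.mem_singleton] at hy
    rcases hy with hy | rfl
    · exact ⟨(hw y hy).1, (hw y hy).2.tail hbc⟩
    · exact ⟨hub.tail hbc, .refl⟩

theorem eq_of_mem_reach_of_mem_sources {s t : V} (ht : t ∈ O.sources) (h : t ∈ O.reach s) :
    t = s := by
  rcases Relation.ReflTransGen.cases_tail h with h | ⟨y, -, hy⟩
  · exact h
  · exact absurd hy (ht y)

section CyclicWitnesses

variable {ℓ : ℕ} [NeZero ℓ] (S x : Fin ℓ → V)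

-- The position of `v` in the window `{2i, 2i + 1, 2i + 2}` of the `2ℓ`-cycle, relative to `2i`:
-- `0`, `1` or `2` according as `v` is reached from `S i` only, from both, or from `S (i + 1)` only.
open scoped Classical in
noncomputable def level (i : Fin ℓ) (v : V) : ℤ :=
  (if v ∈ O.reach (S (i + 1)) then 1 else 0) + (if v ∈ O.reach (S i) then 0 else 1)

-- Which window containing `v` is chosen does not matter, by `cyclePotential_eq`.
open scoped Classical in
noncomputable def cyclePotential (v : V) : ZMod (2 * ℓ) :=
  if h : ∃ i, Relation.ReflTransGen O.D v (x i) then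
    ((2 * h.choose.val : ℕ) : ZMod (2 * ℓ)) + O.level S h.choose v
  else 0

def between : Set V :=
  {v | (∃ i, Relation.ReflTransGen O.D v (x i)) ∧ ∃ j, v ∈ O.reach (S j)}

theorem abs_level_sub_level_le_one {u v : V} (huv : Relation.ReflTransGen O.D u v) (i : Fin ℓ) :
    |O.level S i v - O.level S i u| ≤ 1 := by
  have hmono : ∀ j, u ∈ O.reach (S j) → v ∈ O.reach (S j) := fun j hj =>
    Relation.ReflTransGen.trans hj huv
  have h₁ := hmono (i + 1)
  have h₀ := hmono i
  unfold level
  split_ifs <;> simp_all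

variable {S x} (hℓ : 3 ≤ ℓ) (hx : ∀ i j, x i ∈ O.reach (S j) ↔ j = i ∨ j = i + 1)
include hℓ hx

theorem two_mul_add_level_eq_of_eq_add_one {v : V} {i k : Fin ℓ} (hk : k = i + 1)
    (hvi : Relation.ReflTransGen O.D v (x i)) (hvk : Relation.ReflTransGen O.D v (x k))
    {j : Fin ℓ} (hj : v ∈ O.reach (S j)) :
    ((2 * i.val : ℕ) : ZMod (2 * ℓ)) + O.level S i v =
      ((2 * k.val : ℕ) : ZMod (2 * ℓ)) + O.level S k v := by
  subst hk
  have hbelow : ∀ j, v ∈ O.reach (S j) → (j = i ∨ j = i + 1) ∧ (j = i + 1 ∨ j = i + 1 + 1) :=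
    fun j hj => ⟨(hx i j).1 (hj.trans hvi), (hx (i + 1) j).1 (hj.trans hvk)⟩
  have hni : v ∉ O.reach (S i) := fun h => by
    rcases (hbelow i h).2 with h' | h'
    · exact Fin.add_one_ne_self (by omega) i h'.symm
    · exact Fin.add_one_add_one_ne_self hℓ i h'.symm
  have hni2 : v ∉ O.reach (S (i + 1 + 1)) := fun h => by
    rcases (hbelow _ h).1 with h' | h'
    · exact Fin.add_one_add_one_ne_self hℓ i h'
    · exact Fin.add_one_ne_self (by omega) (i + 1) h'
  have hi1 : v ∈ O.reach (S (i + 1)) := by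
    rcases (hbelow j hj).1 with rfl | rfl
    · exact absurd hj hni
    · exact hj
  simp only [level, hni, hni2, hi1, if_true, if_false, Fin.natCast_two_mul_val_add_one]
  push_cast
  ring

theorem cyclePotential_eq {v : V} {i j : Fin ℓ} (hvi : Relation.ReflTransGen O.D v (x i))
    (hj : v ∈ O.reach (S j)) :
    O.cyclePotential S x v = ((2 * i.val : ℕ) : ZMod (2 * ℓ)) + O.level S i v := by
  have h : ∃ i, Relation.ReflTransGen O.D v (x i) := ⟨i, hvi⟩
  rw [cyclePotential, dif_pos h]
  have hk := h.choose_spec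
  set k := h.choose
  rcases (hx i j).1 (hj.trans hvi) with hji | hji <;>
    rcases (hx k j).1 (hj.trans hk) with hjk | hjk
  · rw [show k = i from hjk.symm.trans hji]
  · exact O.two_mul_add_level_eq_of_eq_add_one hℓ hx (hji.symm.trans hjk) hk hvi hj
  · exact (O.two_mul_add_level_eq_of_eq_add_one hℓ hx (hjk.symm.trans hji) hvi hk hj).symm
  · rw [show k = i from add_left_injective 1 (hjk.symm.trans hji)]

theorem isCyclePotential_cyclePotential :
    (H.induce (O.between S x)).IsCyclePotential
      fun v : O.between S x => O.cyclePotential S x v := by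
  have key : ∀ u v, u ∈ O.between S x → v ∈ O.between S x → O.D u v →
      ∃ d : ℤ, |d| ≤ 1 ∧ O.cyclePotential S x v - O.cyclePotential S x u = d := by
    rintro u v ⟨-, j, hj⟩ ⟨⟨i, hi⟩, -⟩ huv
    refine ⟨O.level S i v - O.level S i u, O.abs_level_sub_level_le_one S (.single huv) i, ?_⟩
    rw [O.cyclePotential_eq hℓ hx hi (hj.tail huv), O.cyclePotential_eq hℓ hx (hi.head huv) hj]
    push_cast
    ring
  rintro ⟨u, hu⟩ ⟨v, hv⟩ hadj
  rcases O.rel_of_adj u v hadj with h | h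
  · exact key u v hu hv h
  · obtain ⟨d, hd, hpd⟩ := key v u hv hu h
    exact ⟨-d, by rwa [abs_neg], by push_cast; rw [← hpd]; ring⟩

theorem exists_walk_winding_eq_two (hS : ∀ i j, S j ∈ O.reach (S i) → i = j) (i : Fin ℓ) :
    ∃ w : H.Walk (S i) (S (i + 1)), (∀ z ∈ w.support, z ∈ O.between S x) ∧
      winding (O.cyclePotential S x) w = 2 := by
  obtain ⟨w₁, hw₁⟩ := O.exists_walk_of_reflTransGen ((hx i i).2 (.inl rfl))
  obtain ⟨w₂, hw₂⟩ := O.exists_walk_of_reflTransGen ((hx i (i + 1)).2 (.inr rfl))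
  have hwin : ∀ z ∈ (w₁.append w₂.reverse).support,
      Relation.ReflTransGen O.D z (x i) ∧ ∃ j, z ∈ O.reach (S j) := by
    intro z hz
    rw [mem_support_append_iff, support_reverse, List.mem_reverse] at hz
    rcases hz with hz | hz
    · exact ⟨(hw₁ z hz).2, i, (hw₁ z hz).1⟩
    · exact ⟨(hw₂ z hz).2, i + 1, (hw₂ z hz).1⟩
  refine ⟨w₁.append w₂.reverse, fun z hz => ⟨⟨i, (hwin z hz).1⟩, (hwin z hz).2⟩, ?_⟩
  have hnext : S (i + 1) ∉ O.reach (S i) := fun h =>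
    Fin.add_one_ne_self (by omega) i (hS _ _ h).symm
  have hprev : S i ∉ O.reach (S (i + 1)) := fun h => Fin.add_one_ne_self (by omega) i (hS _ _ h)
  rw [winding_eq_sub_of_lift _ (by omega) _ (O.level S i) _
    (fun z hz => O.cyclePotential_eq hℓ hx (hwin z hz).1 (hwin z hz).2.choose_spec)]
  · have hself : ∀ j, S j ∈ O.reach (S j) := fun j => Relation.ReflTransGen.refl
    simp only [level, hnext, hprev, hself, if_true, if_false]
    norm_num
  · intro d _
    rcases O.rel_of_adj _ _ d.adj with h | h
    · exact O.abs_level_sub_level_le_one S (.single h) i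
    · rw [abs_sub_comm]
      exact O.abs_level_sub_level_le_one S (.single h) i

open Fin.NatCast in
theorem exists_hasInducedCycle_of_cyclicWitnesses (hS : ∀ i j, S j ∈ O.reach (S i) → i = j) :
    ∃ n, 2 * ℓ ≤ n ∧ HasInducedCycleOfLength H n := by
  set U := O.between S x
  let f : ℕ → U := fun k => ⟨S (k : Fin ℓ), ⟨k, (hx k k).2 (.inl rfl)⟩, k, .refl⟩
  have hstep : ∀ k, ∃ w : (H.induce U).Walk (f k) (f (k + 1)),
      winding (fun v : U => O.cyclePotential S x v) w = 2 := by
    intro k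
    obtain ⟨w, hwU, hw⟩ := O.exists_walk_winding_eq_two hℓ hx hS (k : Fin ℓ)
    exact ⟨(w.induce U hwU).copy rfl (by simp [f]), by rw [winding_copy, winding_induce, hw]⟩
  obtain ⟨w, hw⟩ := exists_walk_winding_eq_mul _ f hstep ℓ
  obtain ⟨n, hn, ⟨e⟩⟩ := exists_embedding_cycleGraph_of_winding_ne_zero (by omega)
    (O.isCyclePotential_cyclePotential hℓ hx) (w.copy rfl (by simp [f]))
    (by rw [winding_copy, hw]; omega)
  exact ⟨n, hn, ⟨(Embedding.induce U).comp e⟩⟩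

end CyclicWitnesses

end GraphOrientation

theorem hasInducedCycle_of_urGraph_cycle_general {V : Type} (H : SimpleGraph V)
    (O : GraphOrientation H) (Sp : Set V) (hSp : Sp ⊆ O.sources)
    (ℓ : ℕ) (hℓ : 3 ≤ ℓ) (s : V) (c : (URGraph O Sp).Walk s s)
    (hc : c.IsCycle) (hlen : c.length = ℓ) :
    ∃ n : ℕ, 2 * ℓ ≤ n ∧ HasInducedCycleOfLength H n := by
  have : NeZero ℓ := ⟨by omega⟩
  obtain ⟨S⟩ := (SimpleGraph.cycleGraph_isContained_iff (by omega)).2 ⟨s, c, hc, hlen⟩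
  have hadj : ∀ i, (URGraph O Sp).Adj (S i) (S (i + 1)) := fun i =>
    S.toHom.map_adj (SimpleGraph.cycleGraph_adj_add_one (by omega) i)
  choose x hx using fun i => (hadj i).2.2.2
  refine O.exists_hasInducedCycle_of_cyclicWitnesses (x := x) hℓ (fun i j => ⟨fun h => ?_, ?_⟩)
    (fun i j h => S.injective (O.eq_of_mem_reach_of_mem_sources (hSp (hadj j).1) h).symm)
  · by_contra hne
    push Not at hne
    refine (hx i).2 (Set.mem_biUnion ⟨(hadj j).1, ?_⟩ h)
    exact fun h' => h'.elim (fun h' => hne.1 (S.injective h')) (fun h' => hne.2 (S.injective h'))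
  · rintro (rfl | rfl)
    exacts [(hx _).1.1, (hx _).1.2]

/-- If the unique reachability graph over a subset `Sp` of the sources
of an acyclic orientation of `H` contains a cycle of length `ℓ ≥ 3`, then `H`
contains an induced cycle of length at least `2ℓ`. -/
theorem hasInducedCycle_of_urGraph_cycle {V : Type} [Fintype V] (H : SimpleGraph V)
    (O : GraphOrientation H) (Sp : Set V) (hSp : Sp ⊆ O.sources)
    (ℓ : ℕ) (hℓ : 3 ≤ ℓ) (s : V) (c : (URGraph O Sp).Walk s s)
    (hc : c.IsCycle) (hlen : c.length = ℓ) :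
    ∃ n : ℕ, 2 * ℓ ≤ n ∧ HasInducedCycleOfLength H n :=
  hasInducedCycle_of_urGraph_cycle_general H O Sp hSp ℓ hℓ s c hc hlen
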